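/- Let T ≥ 1, h, b, p ≥ 0, w ∈ ℝ^T, q ∈ ℝ^T, μ ∈ ℝ^T, and fix σ_k > 0 for all k ≠ τ. Define a_t = h + b + p·1{t=T}, s_t = √(Σ_{k=1}^t σ_k²), β_t = (Σ_{k=1}^t (μ_k − q_k))/s_t, and C_ω(q) = Σ_{t=1}^T [ (a_t·Φ(β_t) − h)·Σ_{k=1}^t (μ_k − q_k) + a_t·φ(β_t)·s_t + w_t q_t − p·μ_t ]. Then for every τ ∈ {1,...,T}, the function σ_τ ↦ C_ω(q) is monotone nondecreasing on (0, ∞). -/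

import Mathlib

/-!
Up to terms not involving `σ`, the `t`-th summand of `C_ω` is
`g(s) = (a Φ(m/s) - h) m + a φ(m/s) s` evaluated at `s = s_t`, with `m = ∑_{k ≤ t} (μ_k - q_k)`.
Because `φ'(u) = -u φ(u)`, the two terms of `g'(s)` involving `m²/s²` cancel and
`g'(s) = a φ(m/s) ≥ 0`. As `s_t` is nondecreasing in `σ_τ > 0` (and constant for `t < τ`),
every summand is nondecreasing in `σ_τ`.
-/

open MeasureTheory ProbabilityTheory
open scoped ENNReal NNReal

/-- The standard normal cumulative distribution function `Φ`. -/
noncomputable def stdNormalCDF (x : ℝ) : ℝ :=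
  (gaussianReal 0 1 (Set.Iic x)).toReal

/-- The standard normal probability density function `φ`. -/
noncomputable def stdNormalPDF (x : ℝ) : ℝ := gaussianPDFReal 0 1 x

/-- Closed-form expected cost `C_ω(q)` of the multi-period newsvendor problem under
independent normal demands, as a function of the parameter vectors `μv` and `σ`. -/
noncomputable def normalCost (T : ℕ) (h b p : ℝ) (w q σ μv : ℕ → ℝ) : ℝ :=
  ∑ t ∈ Finset.Icc 1 T,
    (((h + b + (if t = T then p else 0))
        * stdNormalCDF ((∑ k ∈ Finset.Icc 1 t, (μv k - q k))
            / Real.sqrt (∑ k ∈ Finset.Icc 1 t, (σ k) ^ 2)) - h)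
      * (∑ k ∈ Finset.Icc 1 t, (μv k - q k))
     + (h + b + (if t = T then p else 0))
        * stdNormalPDF ((∑ k ∈ Finset.Icc 1 t, (μv k - q k))
            / Real.sqrt (∑ k ∈ Finset.Icc 1 t, (σ k) ^ 2))
        * Real.sqrt (∑ k ∈ Finset.Icc 1 t, (σ k) ^ 2)
     + w t * q t - p * μv t)

open Set

lemma stdNormalPDF_nonneg (x : ℝ) : 0 ≤ stdNormalPDF x :=
  gaussianPDFReal_nonneg 0 1 x

lemma stdNormalPDF_eq (x : ℝ) : stdNormalPDF x = (√(2 * Real.pi))⁻¹ * Real.exp (-x ^ 2 / 2) := by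
  simp [stdNormalPDF, gaussianPDFReal_def]

lemma integrable_stdNormalPDF : Integrable stdNormalPDF :=
  integrable_gaussianPDFReal 0 1

lemma continuous_stdNormalPDF : Continuous stdNormalPDF := by
  rw [funext stdNormalPDF_eq]
  fun_prop

lemma stdNormalCDF_eq_integral (x : ℝ) : stdNormalCDF x = ∫ t in Iic x, stdNormalPDF t := by
  rw [stdNormalCDF, gaussianReal_apply_eq_integral 0 one_ne_zero, ENNReal.toReal_ofReal]
  · rfl
  · exact integral_nonneg stdNormalPDF_nonneg

lemma hasDerivAt_stdNormalCDF (x : ℝ) : HasDerivAt stdNormalCDF (stdNormalPDF x) x := by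
  have hint := integrable_stdNormalPDF
  have hΦ : stdNormalCDF = fun y => stdNormalCDF 0 + ∫ t in (0 : ℝ)..y, stdNormalPDF t := by
    funext y
    rw [stdNormalCDF_eq_integral, stdNormalCDF_eq_integral,
      ← intervalIntegral.integral_Iic_sub_Iic hint.integrableOn hint.integrableOn]
    ring
  rw [hΦ]
  exact (intervalIntegral.integral_hasDerivAt_right hint.intervalIntegrable
    (continuous_stdNormalPDF.stronglyMeasurableAtFilter _ _)
    continuous_stdNormalPDF.continuousAt).const_add _

lemma hasDerivAt_stdNormalPDF (x : ℝ) : HasDerivAt stdNormalPDF (-x * stdNormalPDF x) x := by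
  rw [funext stdNormalPDF_eq]
  have hexp : HasDerivAt (fun y : ℝ => -y ^ 2 / 2) (-x) x := by
    refine ((hasDerivAt_pow 2 x).fun_neg.div_const 2).congr_deriv ?_
    ring
  refine (hexp.exp.const_mul (√(2 * Real.pi))⁻¹).congr_deriv ?_
  beta_reduce
  ring

noncomputable def periodCost (a c m s : ℝ) : ℝ :=
  (a * stdNormalCDF (m / s) - c) * m + a * stdNormalPDF (m / s) * s

lemma hasDerivAt_periodCost (a c m : ℝ) {s : ℝ} (hs : s ≠ 0) :
    HasDerivAt (periodCost a c m) (a * stdNormalPDF (m / s)) s := by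
  have hβ : HasDerivAt (fun s => m / s) (-m / s ^ 2) s := by
    simpa [div_eq_mul_inv] using (hasDerivAt_inv hs).const_mul m
  have hΦ := (hasDerivAt_stdNormalCDF (m / s)).comp s hβ
  have hφ := (hasDerivAt_stdNormalPDF (m / s)).comp s hβ
  refine ((((hΦ.const_mul a).sub_const c).mul_const m).add
    ((hφ.const_mul a).mul (hasDerivAt_id s))).congr_deriv ?_
  simp only [Function.comp_apply, id]
  field_simp
  ring

lemma monotoneOn_periodCost {a : ℝ} (ha : 0 ≤ a) (c m : ℝ) :
    MonotoneOn (periodCost a c m) (Ioi 0) := by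
  have hderiv : ∀ s ∈ Ioi (0 : ℝ), HasDerivAt (periodCost a c m) (a * stdNormalPDF (m / s)) s :=
    fun s hs => hasDerivAt_periodCost a c m (ne_of_gt hs)
  refine monotoneOn_of_hasDerivWithinAt_nonneg (f' := fun s => a * stdNormalPDF (m / s))
    (convex_Ioi 0) (fun s hs => (hderiv s hs).continuousAt.continuousWithinAt) ?_ ?_ <;>
    rw [interior_Ioi]
  · exact fun s hs => (hderiv s hs).hasDerivWithinAt
  · exact fun s _ => mul_nonneg ha (stdNormalPDF_nonneg _)

lemma normalCost_eq_sum_periodCost (T : ℕ) (h b p : ℝ) (w q σ μv : ℕ → ℝ) :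
    normalCost T h b p w q σ μv = ∑ t ∈ Finset.Icc 1 T,
      (periodCost (h + b + if t = T then p else 0) h (∑ k ∈ Finset.Icc 1 t, (μv k - q k))
        √(∑ k ∈ Finset.Icc 1 t, σ k ^ 2) + w t * q t - p * μv t) :=
  rfl

lemma monotoneOn_periodCost_sqrt_sum_sq_update {ι : Type*} [DecidableEq ι] {a : ℝ} (ha : 0 ≤ a)
    (c m : ℝ) (s : Finset ι) (σ : ι → ℝ) (τ : ι) :
    MonotoneOn (fun x => periodCost a c m √(∑ k ∈ s, Function.update σ τ x k ^ 2)) (Ioi 0) := by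
  have hsq (x : ℝ) : (fun k => Function.update σ τ x k ^ 2) =
      Function.update (fun k => σ k ^ 2) τ (x ^ 2) :=
    funext (Function.apply_update (fun _ y => y ^ 2) σ τ x)
  simp only [hsq]
  by_cases hτ : τ ∈ s
  · simp only [Finset.sum_update_of_mem hτ]
    refine (monotoneOn_periodCost ha c m).comp (fun x hx y _ hxy => ?_) (fun x hx => ?_)
    · have : x ^ 2 ≤ y ^ 2 := pow_le_pow_left₀ (le_of_lt hx) hxy 2
      gcongr
    · have : (0 : ℝ) < x := hx
      exact Real.sqrt_pos.2 (by positivity)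
  · simp only [Finset.sum_update_of_notMem hτ]
    exact monotoneOn_const

theorem stmt_12_general
    (T : ℕ)
    (h b p : ℝ) (hh : 0 ≤ h) (hb : 0 ≤ b) (hp : 0 ≤ p)
    (w q μv σ : ℕ → ℝ) :
    ∀ τ, 1 ≤ τ → τ ≤ T →
      (∀ k, k ≠ τ → 1 ≤ k → k ≤ T → 0 < σ k) →
      MonotoneOn (fun x : ℝ => normalCost T h b p w q (Function.update σ τ x) μv)
        (Set.Ioi (0 : ℝ)) := by
  intro τ _ _ _
  simp only [normalCost_eq_sum_periodCost]
  intro x hx y hy hxy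
  refine Finset.sum_le_sum fun t _ => ?_
  have ha : 0 ≤ h + b + if t = T then p else 0 := by split_ifs <;> positivity
  gcongr ?_ + _ - _
  exact monotoneOn_periodCost_sqrt_sum_sq_update ha _ _ _ σ τ hx hy hxy

/-- The normal-demand newsvendor cost `C_ω(q)` is monotone nondecreasing in each standard
deviation parameter `σ τ` on `(0, ∞)` (with all other parameters fixed). -/
theorem stmt_12
    (T : ℕ) (hT : 1 ≤ T)
    (h b p : ℝ) (hh : 0 ≤ h) (hb : 0 ≤ b) (hp : 0 ≤ p)
    (w q μv σ : ℕ → ℝ) :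
    ∀ τ, 1 ≤ τ → τ ≤ T →
      (∀ k, k ≠ τ → 1 ≤ k → k ≤ T → 0 < σ k) →
      MonotoneOn (fun x : ℝ => normalCost T h b p w q (Function.update σ τ x) μv)
        (Set.Ioi (0 : ℝ)) :=
  stmt_12_general T h b p hh hb hp w q μv σ
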